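/- Let m ≥ 1 be an integer. Then H_{n,m} = {h ∈ K_{n,m} : h·e₀ = e₀}, where e₀ denotes the (n+1)-st standard basis vector of F^{2n+1}; that is, an element of K_{n,m} lies in the embedded SO_{2n}(F) if and only if it fixes e₀. -/

import Mathlib

open scoped Pointwise

namespace SO2n1Paper

noncomputable section

variable {F : Type} [Field F]

/-- The subset `ϖ^k · 𝔬` of `F`; for `k ≥ 0` this is `𝔭^k`, and for `k < 0` it is the
fractional ideal `𝔭^k` (`ϖ` being a uniformizer of the valuation ring `𝔬`). -/
def pPow (O : ValuationSubring F) (ϖ : F) (k : ℤ) : Set F :=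
  {x | ∃ y ∈ O, x = ϖ ^ k * y}

/-- `x` is a unit of the valuation ring `𝔬`. -/
def isOUnit (O : ValuationSubring F) (x : F) : Prop :=
  x ∈ O ∧ ∃ y ∈ O, x * y = 1

/-- The subset `1 + ϖ^k · 𝔬` of `F`. -/
def onePlusP (O : ValuationSubring F) (ϖ : F) (k : ℕ) : Set F :=
  {x | ∃ y ∈ O, x = 1 + ϖ ^ k * y}

/-- `ϖ` is a uniformizer of `𝔬`: it is nonzero and the nonunits of `𝔬`
(i.e. the maximal ideal `𝔭`) are exactly `ϖ·𝔬`. -/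
def IsUniformizer (O : ValuationSubring F) (ϖ : F) : Prop :=
  ϖ ≠ 0 ∧ ∀ x : F, (x ∈ O ∧ ¬ isOUnit O x) ↔ x ∈ pPow O ϖ 1

/-- The antidiagonal matrix `J_k`. -/
def Jmat (k : ℕ) : Matrix (Fin k) (Fin k) F :=
  Matrix.of fun i j => if (i : ℕ) + (j : ℕ) + 1 = k then 1 else 0

/-- The Gram matrix `S_n` with (n,1,n)-block form `[[0,0,J_n],[0,2,0],[J_n,0,0]]`. -/
def Smat (n : ℕ) : Matrix (Fin (2*n+1)) (Fin (2*n+1)) F :=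
  Matrix.of fun i j =>
    if (i : ℕ) = n ∧ (j : ℕ) = n then 2
    else if (i : ℕ) + (j : ℕ) = 2*n then 1 else 0

/-- `SO_{2n+1}(F) = {g ∈ SL_{2n+1}(F) : ᵗg S_n g = S_n}`, as a set of matrices. -/
def SOodd (n : ℕ) : Set (Matrix (Fin (2*n+1)) (Fin (2*n+1)) F) :=
  {g | g.det = 1 ∧ g.transpose * Smat n * g = Smat n}

/-- `SO_{2r}(F) = {h ∈ SL_{2r}(F) : ᵗh J_{2r} h = J_{2r}}`, as a set of matrices. -/
def SOevenSet (r : ℕ) : Set (Matrix (Fin (2*r)) (Fin (2*r)) F) :=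
  {h | h.det = 1 ∧ h.transpose * Jmat (2*r) * h = Jmat (2*r)}

/-- The central index `n+1` (1-based), i.e. `n` (0-based). -/
def cen (n : ℕ) : Fin (2*n+1) := ⟨n, by omega⟩

/-- The 0-based index corresponding to the 1-based index `ℓ` (for `1 ≤ ℓ ≤ 2n+1`). -/
def idx1 (n ℓ : ℕ) : Fin (2*n+1) := ⟨(ℓ - 1) % (2*n+1), Nat.mod_lt _ (by omega)⟩

/-- The 0-based index corresponding to `ℓ* = 2n+2-ℓ` (1-based), for `1 ≤ ℓ ≤ n`. -/
def idxStar (n ℓ : ℕ) : Fin (2*n+1) := ⟨(2*n+1 - ℓ) % (2*n+1), Nat.mod_lt _ (by omega)⟩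

/-- The root element `x_{ε_ℓ}(y) = I − 2y·E_{ℓ,n+1} + y·E_{n+1,ℓ*} − y²·E_{ℓ,ℓ*}`. -/
def xPos (n ℓ : ℕ) (y : F) : Matrix (Fin (2*n+1)) (Fin (2*n+1)) F :=
  1 - Matrix.single (idx1 n ℓ) (cen n) (2*y)
    + Matrix.single (cen n) (idxStar n ℓ) y
    - Matrix.single (idx1 n ℓ) (idxStar n ℓ) (y^2)

/-- The root element `x_{−ε_ℓ}(y) = I + 2y·E_{ℓ*,n+1} − y·E_{n+1,ℓ} − y²·E_{ℓ*,ℓ}`. -/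
def xNeg (n ℓ : ℕ) (y : F) : Matrix (Fin (2*n+1)) (Fin (2*n+1)) F :=
  1 + Matrix.single (idxStar n ℓ) (cen n) (2*y)
    - Matrix.single (cen n) (idx1 n ℓ) y
    - Matrix.single (idxStar n ℓ) (idx1 n ℓ) (y^2)

/-- The element `w_{ε_ℓ,k} = x_{ε_ℓ}(ϖ^{−k})·x_{−ε_ℓ}(−ϖ^{k})·x_{ε_ℓ}(ϖ^{−k})`. -/
def wEps (n ℓ : ℕ) (ϖ : F) (k : ℕ) : Matrix (Fin (2*n+1)) (Fin (2*n+1)) F :=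
  xPos n ℓ ((ϖ ^ k)⁻¹) * xNeg n ℓ (-(ϖ ^ k)) * xPos n ℓ ((ϖ ^ k)⁻¹)

/-- The exponent pattern of `J_{n,m}`: entry `(i,j)` must lie in `𝔭^(lvl n m i j)`. -/
def lvl (n m : ℕ) (i j : Fin (2*n+1)) : ℤ :=
  if (i : ℕ) < n ∧ n < (j : ℕ) then -(m : ℤ)
  else if (n < (i : ℕ) ∧ (j : ℕ) ≤ n) ∨ ((i : ℕ) = n ∧ (j : ℕ) < n) then (m : ℤ)
  else 0

/-- The open compact subgroup `J_{n,m}` of `SO_{2n+1}(F)` (for `m = 0` this is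
`SO_{2n+1}(F) ∩ GL_{2n+1}(𝔬)`). -/
def Jlevel (O : ValuationSubring F) (ϖ : F) (n m : ℕ) :
    Set (Matrix (Fin (2*n+1)) (Fin (2*n+1)) F) :=
  {g ∈ SOodd n | ∀ i j, g i j ∈ pPow O ϖ (lvl n m i j)}

/-- The open compact subgroup `K_{n,m} = {k ∈ J_{n,m} : k_{n+1,n+1} ∈ 1+𝔭}` (for `m ≥ 1`),
and `K_{n,0} = J_{n,0}`. -/
def Klevel (O : ValuationSubring F) (ϖ : F) (n m : ℕ) :
    Set (Matrix (Fin (2*n+1)) (Fin (2*n+1)) F) :=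
  if m = 0 then Jlevel O ϖ n 0
  else {g ∈ Jlevel O ϖ n m | g (cen n) (cen n) ∈ onePlusP O ϖ 1}

/-- The diagonal matrix `ϖ^{kλ_r}`: first `r` entries `ϖ^k`, last `r` entries `ϖ^{−k}`,
remaining entries `1`. -/
def lamDiag (ϖ : F) (n r : ℕ) (k : ℤ) : Matrix (Fin (2*n+1)) (Fin (2*n+1)) F :=
  Matrix.diagonal fun i =>
    if (i : ℕ) < r then ϖ ^ k else if 2*n+1-r ≤ (i : ℕ) then ϖ ^ (-k) else 1

/-- `K⁰_{n,m} = ϖ^{⌊m/2⌋λ_n} · K_{n,m} · ϖ^{−⌊m/2⌋λ_n}`. -/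
def K0level (O : ValuationSubring F) (ϖ : F) (n m : ℕ) :
    Set (Matrix (Fin (2*n+1)) (Fin (2*n+1)) F) :=
  (fun g => lamDiag ϖ n n ((m / 2 : ℕ) : ℤ) * g * lamDiag ϖ n n (-((m / 2 : ℕ) : ℤ))) ''
    Klevel O ϖ n m

/-- `J⁰_{n,m} = ϖ^{⌊m/2⌋λ_n} · J_{n,m} · ϖ^{−⌊m/2⌋λ_n}`. -/
def J0level (O : ValuationSubring F) (ϖ : F) (n m : ℕ) :
    Set (Matrix (Fin (2*n+1)) (Fin (2*n+1)) F) :=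
  (fun g => lamDiag ϖ n n ((m / 2 : ℕ) : ℤ) * g * lamDiag ϖ n n (-((m / 2 : ℕ) : ℤ))) ''
    Jlevel O ϖ n m

/-- The index translation for the embedding `SO_{2r} ↪ SO_{2n+1}`. -/
def toSmall (n r : ℕ) (i : Fin (2*n+1)) : Option (Fin (2*r)) :=
  if h : (i : ℕ) < r ∧ 0 < r then some ⟨(i : ℕ), by omega⟩
  else if h2 : 2*n+1-r ≤ (i : ℕ) ∧ r ≤ n ∧ 0 < r then
    some ⟨(i : ℕ) - (2*n+1-2*r), by have := i.isLt; omega⟩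
  else none

/-- The embedding `SO_{2r}(F) ↪ SO_{2n+1}(F)` sending `[[a,b],[c,d]]` to
`[[a,0,b],[0,I,0],[c,0,d]]`. -/
def embedSO (n r : ℕ) (h : Matrix (Fin (2*r)) (Fin (2*r)) F) :
    Matrix (Fin (2*n+1)) (Fin (2*n+1)) F :=
  Matrix.of fun i j =>
    match toSmall n r i, toSmall n r j with
    | some a, some b => h a b
    | none, none => if i = j then 1 else 0
    | _, _ => 0

/-- `H_{r,m} = SO_{2r}(F) ∩ K_{n,m}` (with `SO_{2r}(F)` embedded in `SO_{2n+1}(F)`). -/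
def Hlevel (O : ValuationSubring F) (ϖ : F) (n r m : ℕ) :
    Set (Matrix (Fin (2*n+1)) (Fin (2*n+1)) F) :=
  (embedSO n r '' SOevenSet r) ∩ Klevel O ϖ n m

/-- Block index for the partition `(r, 2(n−r)+1, r)` of `2n+1`. -/
def blk (n r : ℕ) (i : Fin (2*n+1)) : ℕ :=
  if (i : ℕ) < r then 0 else if (i : ℕ) < 2*n+1-r then 1 else 2

/-- The opposite maximal parabolic `P̄_{α_r}(F)`: block lower triangular elements of
`SO_{2n+1}(F)` for the partition `(r, 2(n−r)+1, r)`. -/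
def Pbar (n r : ℕ) : Set (Matrix (Fin (2*n+1)) (Fin (2*n+1)) F) :=
  {g ∈ SOodd n | ∀ i j, blk n r i < blk n r j → g i j = 0}

/-- The maximal parabolic `P_{α_r}(F)`: block upper triangular elements of
`SO_{2n+1}(F)` for the partition `(r, 2(n−r)+1, r)`. -/
def Ppara (n r : ℕ) : Set (Matrix (Fin (2*n+1)) (Fin (2*n+1)) F) :=
  {g ∈ SOodd n | ∀ i j, blk n r j < blk n r i → g i j = 0}

/-- The upper triangular Borel subgroup `B_n(F)` of `SO_{2n+1}(F)`. -/
def Bupper (n : ℕ) : Set (Matrix (Fin (2*n+1)) (Fin (2*n+1)) F) :=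
  {g ∈ SOodd n | ∀ i j : Fin (2*n+1), (j : ℕ) < (i : ℕ) → g i j = 0}

/-- The lower triangular Borel subgroup `B̄_n(F)` of `SO_{2n+1}(F)`. -/
def Blower (n : ℕ) : Set (Matrix (Fin (2*n+1)) (Fin (2*n+1)) F) :=
  {g ∈ SOodd n | ∀ i j : Fin (2*n+1), (i : ℕ) < (j : ℕ) → g i j = 0}

/-- `a* = J_r · ᵗa⁻¹ · J_r`. -/
def astar (r : ℕ) (a : Matrix (Fin r) (Fin r) F) : Matrix (Fin r) (Fin r) F :=
  Jmat r * (a⁻¹).transpose * Jmat r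

/-- The block diagonal matrix `diag(a, g₀, a*)` for the partition `(r, 2(n−r)+1, r)`. -/
def leviEmbed (n r : ℕ) (a : Matrix (Fin r) (Fin r) F)
    (g0 : Matrix (Fin (2*(n-r)+1)) (Fin (2*(n-r)+1)) F) :
    Matrix (Fin (2*n+1)) (Fin (2*n+1)) F :=
  Matrix.of fun i j =>
    if hi : (i : ℕ) < r then
      if hj : (j : ℕ) < r then a ⟨i, hi⟩ ⟨j, hj⟩ else 0
    else if hi2 : (i : ℕ) < 2*n+1-r then
      if hj2 : r ≤ (j : ℕ) ∧ (j : ℕ) < 2*n+1-r then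
        g0 ⟨(i : ℕ) - r, by have := i.isLt; omega⟩ ⟨(j : ℕ) - r, by have := j.isLt; omega⟩
      else 0
    else
      if hj3 : 2*n+1-r ≤ (j : ℕ) then
        astar r a ⟨(i : ℕ) - (2*n+1-r), by have := i.isLt; omega⟩
          ⟨(j : ℕ) - (2*n+1-r), by have := j.isLt; omega⟩
      else 0

/-- The Levi subgroup `M_{α_r}(F) = {diag(a, g₀, a*) : a ∈ GL_r(F), g₀ ∈ SO_{2(n−r)+1}(F)}`. -/
def MLevi (n r : ℕ) : Set (Matrix (Fin (2*n+1)) (Fin (2*n+1)) F) :=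
  {g | ∃ (a : Matrix (Fin r) (Fin r) F)
        (g0 : Matrix (Fin (2*(n-r)+1)) (Fin (2*(n-r)+1)) F),
      IsUnit a.det ∧ g0 ∈ SOodd (n - r) ∧ g = leviEmbed n r a g0}

/-- The unipotent radical `N̄_{α_r}(F)` of `P̄_{α_r}(F)`. -/
def NbarUnip (n r : ℕ) : Set (Matrix (Fin (2*n+1)) (Fin (2*n+1)) F) :=
  {g ∈ SOodd n | (∀ i j, blk n r i < blk n r j → g i j = 0) ∧
    ∀ i j, blk n r i = blk n r j → g i j = if i = j then 1 else 0}

/-- The unipotent radical `N_{α_r}(F)` of `P_{α_r}(F)`. -/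
def NUnip (n r : ℕ) : Set (Matrix (Fin (2*n+1)) (Fin (2*n+1)) F) :=
  {g ∈ SOodd n | (∀ i j, blk n r j < blk n r i → g i j = 0) ∧
    ∀ i j, blk n r i = blk n r j → g i j = if i = j then 1 else 0}

/-- `M̄^s_{r,m} = {g ∈ M_{α_r}(F) : s⁻¹·g·u·s ∈ K⁰_{n,m} for some u ∈ N̄_{α_r}(F)}`. -/
def Mbar (O : ValuationSubring F) (ϖ : F) (n r m : ℕ)
    (s : Matrix (Fin (2*n+1)) (Fin (2*n+1)) F) :
    Set (Matrix (Fin (2*n+1)) (Fin (2*n+1)) F) :=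
  {g ∈ MLevi n r | ∃ u ∈ NbarUnip n r, s⁻¹ * (g * u) * s ∈ K0level O ϖ n m}

/-- `M^s_{r,m} = {g ∈ M_{α_r}(F) : s⁻¹·g·u·s ∈ K⁰_{n,m} for some u ∈ N_{α_r}(F)}`. -/
def Mstd (O : ValuationSubring F) (ϖ : F) (n r m : ℕ)
    (s : Matrix (Fin (2*n+1)) (Fin (2*n+1)) F) :
    Set (Matrix (Fin (2*n+1)) (Fin (2*n+1)) F) :=
  {g ∈ MLevi n r | ∃ u ∈ NUnip n r, s⁻¹ * (g * u) * s ∈ K0level O ϖ n m}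

/-- `Γ'_{r,m} ⊆ GL_r(𝔬)`: matrices `a` with `a_{i,r} ∈ 𝔭^m` for `1 ≤ i ≤ r−1` and
`a_{r,r} ∈ 1+𝔭^m` (resp. `a_{r,r} ∈ 𝔬^×` when `m = 0`). -/
def GammaPrime (O : ValuationSubring F) (ϖ : F) (r m : ℕ) :
    Set (Matrix (Fin r) (Fin r) F) :=
  {a | (∀ i j, a i j ∈ O) ∧ isOUnit O a.det ∧
    ∀ i j : Fin r, (j : ℕ) = r - 1 →
      (((i : ℕ) < r - 1 → a i j ∈ pPow O ϖ (m : ℤ)) ∧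
       ((i : ℕ) = r - 1 →
         if m = 0 then isOUnit O (a i j) else a i j ∈ onePlusP O ϖ m))}

/-- `Γ_{r,m} ⊆ GL_r(𝔬)`: matrices `a` with `a_{r,j} ∈ 𝔭^m` for `1 ≤ j ≤ r−1` and
`a_{r,r} ∈ 1+𝔭^m` (resp. `a_{r,r} ∈ 𝔬^×` when `m = 0`). -/
def GammaRS (O : ValuationSubring F) (ϖ : F) (r m : ℕ) :
    Set (Matrix (Fin r) (Fin r) F) :=
  {a | (∀ i j, a i j ∈ O) ∧ isOUnit O a.det ∧
    ∀ i j : Fin r, (i : ℕ) = r - 1 →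
      (((j : ℕ) < r - 1 → a i j ∈ pPow O ϖ (m : ℤ)) ∧
       ((j : ℕ) = r - 1 →
         if m = 0 then isOUnit O (a i j) else a i j ∈ onePlusP O ϖ m))}

end

/-! If `x ∈ SO_{2n+1}(F)` fixes `e₀`, then `ᵗx` fixes `S e₀ = 2 e₀`, so (as `2 ≠ 0`) the centre
row and the centre column of `x` are those of the identity. Deleting them leaves a matrix `h`
with `x = embedSO h`; Laplace expansion along the centre row gives `det h = det x`, and since the
centre row of `S` also vanishes off the diagonal, the centre index contributes nothing to
`ᵗx S x` away from the centre, whence `ᵗh J h = J`. -/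

end SO2n1Paper

namespace Matrix

variable {R : Type*}

theorem submatrix_mul_of_row_eq_zero [NonUnitalNonAssocSemiring R] {l o l' o' : Type*} {k : ℕ}
    (A : Matrix l (Fin (k + 1)) R) (B : Matrix (Fin (k + 1)) o R) (f : l' → l) (g : o' → o)
    (p : Fin (k + 1)) (hB : ∀ j, B p (g j) = 0) :
    (A * B).submatrix f g = A.submatrix f p.succAbove * B.submatrix p.succAbove g := by
  ext i j
  simp [mul_apply, Fin.sum_univ_succAbove _ p, hB]

theorem det_eq_det_submatrix_succAbove [CommRing R] {k : ℕ}
    (A : Matrix (Fin (k + 1)) (Fin (k + 1)) R) (p : Fin (k + 1)) (hA : A p = Pi.single p 1) :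
    A.det = (A.submatrix p.succAbove p.succAbove).det := by
  rw [det_succ_row A p, Fintype.sum_eq_single p (fun j hj => by simp [hA, hj])]
  simp [hA, ← two_mul]

theorem transpose_mulVec_mulVec_eq_of_mulVec_eq [CommSemiring R] {k : Type*} [Fintype k]
    {S x : Matrix k k R} (hx : xᵀ * S * x = S) {v : k → R} (hv : x *ᵥ v = v) :
    xᵀ *ᵥ (S *ᵥ v) = S *ᵥ v := by
  rw [mulVec_mulVec]
  nth_rewrite 1 [← hv]
  rw [mulVec_mulVec, hx]

end Matrix

namespace SO2n1Paper

open Matrix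

section

variable {F : Type} [Field F]

@[simp]
theorem val_cen (n : ℕ) : (cen n : ℕ) = n := rfl

theorem val_succAbove_cen (n : ℕ) (a : Fin (2 * n)) :
    ((cen n).succAbove a : ℕ) = if (a : ℕ) < n then (a : ℕ) else (a : ℕ) + 1 := by
  simp only [Fin.succAbove, apply_ite Fin.val, Fin.lt_def, Fin.val_castSucc, Fin.val_succ, val_cen]

theorem toSmall_cen (n : ℕ) : toSmall n n (cen n) = none := by
  rw [toSmall, dif_neg (by rw [val_cen]; omega), dif_neg (by rw [val_cen]; omega)]

theorem toSmall_succAbove_cen (n : ℕ) (a : Fin (2 * n)) :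
    toSmall n n ((cen n).succAbove a) = some a := by
  have ha := a.isLt
  have hv := val_succAbove_cen n a
  unfold toSmall
  split_ifs at hv ⊢ <;> first | omega | (rw [Option.some.injEq, Fin.ext_iff, Fin.val_mk]; omega)

section Embedding

variable (n : ℕ) (h : Matrix (Fin (2 * n)) (Fin (2 * n)) F)

@[simp]
theorem embedSO_succAbove_succAbove (a b : Fin (2 * n)) :
    embedSO n n h ((cen n).succAbove a) ((cen n).succAbove b) = h a b := by
  simp [embedSO, toSmall_succAbove_cen]

@[simp]
theorem embedSO_succAbove_cen (a : Fin (2 * n)) :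
    embedSO n n h ((cen n).succAbove a) (cen n) = 0 := by
  simp [embedSO, toSmall_succAbove_cen, toSmall_cen]

@[simp]
theorem embedSO_cen_succAbove (b : Fin (2 * n)) :
    embedSO n n h (cen n) ((cen n).succAbove b) = 0 := by
  simp [embedSO, toSmall_succAbove_cen, toSmall_cen]

@[simp]
theorem embedSO_cen_cen : embedSO n n h (cen n) (cen n) = 1 := by
  simp [embedSO, toSmall_cen]

theorem embedSO_mulVec_single_cen :
    embedSO n n h *ᵥ Pi.single (cen n) 1 = Pi.single (cen n) 1 := by
  ext i
  rw [mulVec_single_one]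
  cases i using Fin.succAboveCases (cen n) <;> simp

end Embedding

theorem embedSO_submatrix_succAbove {n : ℕ} (x : Matrix (Fin (2 * n + 1)) (Fin (2 * n + 1)) F)
    (hcol : x *ᵥ Pi.single (cen n) 1 = Pi.single (cen n) 1)
    (hrow : x (cen n) = Pi.single (cen n) 1) :
    embedSO n n (x.submatrix (cen n).succAbove (cen n).succAbove) = x := by
  have hcol' (i) : x i (cen n) = (Pi.single (cen n) 1 : Fin (2 * n + 1) → F) i := by
    rw [← hcol, mulVec_single_one, col_apply]
  ext i j
  cases i using Fin.succAboveCases (cen n) <;> cases j using Fin.succAboveCases (cen n) <;>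
    simp [hrow, hcol']

theorem Smat_mulVec_single_cen (n : ℕ) :
    (Smat n : Matrix _ _ F) *ᵥ Pi.single (cen n) 1 = (2 : F) • Pi.single (cen n) 1 := by
  ext i
  rw [mulVec_single_one]
  cases i using Fin.succAboveCases (cen n) with
  | x => simp [Smat]
  | p a =>
    have := a.isLt
    simp only [col_apply, Smat, of_apply, val_cen, val_succAbove_cen, Pi.smul_apply,
      Pi.single_apply, Fin.succAbove_ne, if_false, smul_zero]
    split_ifs <;> first | rfl | omega

theorem Smat_cen_succAbove (n : ℕ) (b : Fin (2 * n)) :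
    (Smat n : Matrix _ _ F) (cen n) ((cen n).succAbove b) = 0 := by
  have := b.isLt
  simp only [Smat, of_apply, val_cen, val_succAbove_cen]
  split_ifs <;> first | rfl | omega

theorem Smat_submatrix_succAbove (n : ℕ) :
    (Smat n : Matrix _ _ F).submatrix (cen n).succAbove (cen n).succAbove = Jmat (2 * n) := by
  ext a b
  have := a.isLt
  have := b.isLt
  simp only [Smat, Jmat, submatrix_apply, of_apply, val_succAbove_cen]
  split_ifs <;> first | rfl | omega

theorem Klevel_subset_SOodd (O : ValuationSubring F) (ϖ : F) (n m : ℕ) :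
    Klevel O ϖ n m ⊆ SOodd n := by
  unfold Klevel
  split_ifs
  exacts [fun _ hg => hg.1, fun _ hg => hg.1.1]

theorem mem_image_embedSO_of_mulVec_eq (h2 : (2 : F) ≠ 0) {n : ℕ}
    {x : Matrix (Fin (2 * n + 1)) (Fin (2 * n + 1)) F} (hx : x ∈ SOodd n)
    (hfix : x *ᵥ Pi.single (cen n) 1 = Pi.single (cen n) 1) :
    x ∈ embedSO n n '' SOevenSet n := by
  have hrow : x (cen n) = Pi.single (cen n) 1 := by
    have h := transpose_mulVec_mulVec_eq_of_mulVec_eq hx.2 hfix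
    rw [Smat_mulVec_single_cen, mulVec_smul] at h
    rw [← smul_right_injective _ h2 h, mulVec_single_one]
    rfl
  have hrow' (j) : x (cen n) ((cen n).succAbove j) = 0 := by simp [hrow]
  refine ⟨x.submatrix (cen n).succAbove (cen n).succAbove, ⟨?_, ?_⟩,
    embedSO_submatrix_succAbove x hfix hrow⟩
  · rw [← det_eq_det_submatrix_succAbove x (cen n) hrow, hx.1]
  · rw [transpose_submatrix, ← Smat_submatrix_succAbove,
      ← submatrix_mul_of_row_eq_zero _ _ _ _ _ (Smat_cen_succAbove n),
      ← submatrix_mul_of_row_eq_zero _ _ _ _ _ hrow', hx.2]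

end

theorem statement10_general
    (p : ℕ) [Fact p.Prime] (F : Type) [Field F]
    [Algebra ℚ_[p] F]
    (O : ValuationSubring F)
    (ϖ : F)
    (n : ℕ)
    (m : ℕ) :
    Hlevel O ϖ n n m =
      {h ∈ Klevel O ϖ n m | h.mulVec (Pi.single (cen n) 1) = Pi.single (cen n) 1} := by
  have : CharZero F := charZero_of_injective_algebraMap (algebraMap ℚ_[p] F).injective
  ext x
  constructor
  · rintro ⟨⟨h, -, rfl⟩, hK⟩
    exact ⟨hK, embedSO_mulVec_single_cen n h⟩
  · rintro ⟨hK, hfix⟩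
    exact ⟨mem_image_embedSO_of_mulVec_eq two_ne_zero (Klevel_subset_SOodd O ϖ n m hK) hfix,
      hK⟩

/-- For `m ≥ 1`, `H_{n,m} = {h ∈ K_{n,m} : h·e₀ = e₀}`, where `e₀` is the
`(n+1)`-st standard basis vector of `F^{2n+1}`. -/
theorem statement10
    (p : ℕ) [Fact p.Prime] (F : Type) [Field F]
    [Algebra ℚ_[p] F] [FiniteDimensional ℚ_[p] F]
    (O : ValuationSubring F)
    (hO : ∀ x : ℚ_[p], algebraMap ℚ_[p] F x ∈ O ↔ ‖x‖ ≤ 1)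
    (ϖ : F) (hϖ : IsUniformizer O ϖ)
    (n : ℕ) (hn : 1 ≤ n)
    (m : ℕ) (hm : 1 ≤ m) :
    Hlevel O ϖ n n m =
      {h ∈ Klevel O ϖ n m | h.mulVec (Pi.single (cen n) 1) = Pi.single (cen n) 1} :=
  statement10_general p F O ϖ n m

end SO2n1Paper
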